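/- Let p ≥ 5 be a prime, e ≥ 1, and A, B ∈ R = ℤ/p^eℤ with 4A³ + 27B² a unit of R. Fix a function z : R → R such that for every X with p ∣ X one has p ∣ z(X) and z(X) = X³ + A·X·z(X)² + B·z(X)³, and define the addition op and the iteration iter : ℕ → R with step (p : R) as in the context. Then for every n ∈ ℕ: iter n = 0 if and only if p^(e−1) divides n. (Equivalently, the point at infinity (p : 1 : z(p)) has order exactly p^(e−1) in E_{A,B}(ℤ/p^eℤ), so the kernel of reduction E_{A,B}(ℤ/p^eℤ) → E_{A,B}(𝔽_p) is cyclic of order p^(e−1), generated by (p : 1 : z(p)).) -/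
import Mathlib


/-- First Bosma–Lenstra addition-law polynomial, specialized at `Y₁ = Y₂ = 1`. -/
def bosmaLenstraT1 {R : Type*} [CommRing R] (A B X₁ Z₁ X₂ Z₂ : R) : R :=
  (X₁ + X₂) - A * X₁ * X₂ * (Z₁ + Z₂) - A * (X₁ + X₂) * (X₁ * Z₂ + X₂ * Z₁)
    - 3 * B * (X₁ + X₂) * Z₁ * Z₂ - 3 * B * (X₁ * Z₂ + X₂ * Z₁) * (Z₁ + Z₂)
    + A ^ 2 * (Z₁ + Z₂) * Z₁ * Z₂

/-- Second Bosma–Lenstra addition-law polynomial, specialized at `Y₁ = Y₂ = 1`. -/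
def bosmaLenstraT2 {R : Type*} [CommRing R] (A B X₁ Z₁ X₂ Z₂ : R) : R :=
  1 + 3 * A * X₁ ^ 2 * X₂ ^ 2 + 9 * B * X₁ * X₂ * (X₁ * Z₂ + X₂ * Z₁)
    - A ^ 2 * X₁ * Z₂ * (X₁ * Z₂ + 2 * X₂ * Z₁)
    - A ^ 2 * X₂ * Z₁ * (2 * X₁ * Z₂ + X₂ * Z₁)
    - 3 * A * B * Z₁ * Z₂ * (X₁ * Z₂ + X₂ * Z₁)
    - (A ^ 3 + 9 * B ^ 2) * Z₁ ^ 2 * Z₂ ^ 2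

/-- `X`-coordinate of the sum of the points at infinity `(X₁ : 1 : z X₁)` and
`(X₂ : 1 : z X₂)`, computed via the Bosma–Lenstra addition law. -/
noncomputable def bosmaLenstraOp {R : Type*} [CommRing R] (A B : R) (z : R → R) (X₁ X₂ : R) : R :=
  Ring.inverse (bosmaLenstraT2 A B X₁ (z X₁) X₂ (z X₂)) *
    bosmaLenstraT1 A B X₁ (z X₁) X₂ (z X₂)

/-- `X`-coordinate of the `n`-th multiple of the point at infinity `(s : 1 : z s)`. -/
noncomputable def bosmaLenstraIter {R : Type*} [CommRing R] (A B : R) (z : R → R) (s : R) : ℕ → R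
  | 0 => 0
  | n + 1 => bosmaLenstraOp A B z (bosmaLenstraIter A B z s n) s

namespace BLaux

variable {R : Type*} [CommRing R]

lemma T1_shift (A B P x z1 z2 δ : R) (h1 : δ * P ^ 2 = 0) (h2 : δ ^ 2 * P = 0) :
    bosmaLenstraT1 A B (P * x + δ) (P * z1) P (P * z2)
      = bosmaLenstraT1 A B (P * x) (P * z1) P (P * z2) + δ := by
  unfold bosmaLenstraT1
  linear_combination (-(3*B*z2^2) - 6*B*z1*z2 - 2*A*z2 - 2*A*z1 - 2*A*x*z2) * h1
    + (-(A*z2)) * h2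

lemma T2_shift (A B P x z1 z2 δ : R) (h1 : δ * P ^ 2 = 0) (h2 : δ ^ 2 * P = 0) :
    bosmaLenstraT2 A B (P * x + δ) (P * z1) P (P * z2)
      = bosmaLenstraT2 A B (P * x) (P * z1) P (P * z2) := by
  unfold bosmaLenstraT2
  linear_combination (9*B*P*z1 + 18*B*P*x*z2 + 6*A*P*x - 3*A*B*P*z1*z2^2 - 4*A^2*P*z1*z2
      - 2*A^2*P*x*z2^2) * h1
    + (9*B*P*z2 + 3*A*P - A^2*P*z2^2) * h2

lemma T1_eq (A B P x z1 z2 : R) :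
    bosmaLenstraT1 A B (P * x) (P * z1) P (P * z2)
      = P * (1 + x - 6*B*P^2*z1*z2 - 3*B*P^2*z1^2 - 3*B*P^2*x*z2^2 - 6*B*P^2*x*z1*z2
          - A*P^2*z1 - 2*A*P^2*x*z2 - 2*A*P^2*x*z1 - A*P^2*x^2*z2 + A^2*P^2*z1*z2^2
          + A^2*P^2*z1^2*z2) := by
  unfold bosmaLenstraT1; ring

lemma T2_eq (A B P x z1 z2 : R) :
    bosmaLenstraT2 A B (P * x) (P * z1) P (P * z2)
      = 1 + P ^ 2 * (9*B*P^2*x*z1 + 9*B*P^2*x^2*z2 - 9*B^2*P^2*z1^2*z2^2 + 3*A*P^2*x^2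
          - 3*A*B*P^2*z1^2*z2 - 3*A*B*P^2*x*z1*z2^2 - A^2*P^2*z1^2 - 4*A^2*P^2*x*z1*z2
          - A^2*P^2*x^2*z2^2 - A^3*P^2*z1^2*z2^2) := by
  unfold bosmaLenstraT2; ring

lemma zdiff (A B P x v vp δ : R) (h1 : δ * P ^ 2 = 0) (h2 : δ ^ 2 * P = 0) (h3 : δ ^ 3 = 0)
    (E1 : P * v = (P * x + δ) ^ 3 + A * (P * x + δ) * (P * v) ^ 2 + B * (P * v) ^ 3)
    (E2 : P * vp = (P * x) ^ 3 + A * (P * x) * (P * vp) ^ 2 + B * (P * vp) ^ 3) :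
    (P * v - P * vp) *
      (1 - A * (P * x + δ) * (P * v + P * vp)
        - B * ((P * v) ^ 2 + (P * v) * (P * vp) + (P * vp) ^ 2)) = 0 := by
  linear_combination E1 - E2 + (3*x^2 + A*vp^2) * h1 + (3*x) * h2 + h3



lemma eq_zero_of_mul_unit {R : Type*} [CommRing R] {a u : R} (h : a * u = 0) (hu : IsUnit u) :
    a = 0 := by
  have := congrArg (· * Ring.inverse u) h
  simpa [mul_assoc, Ring.mul_inverse_cancel u hu] using this

lemma map_ring_inverse {R S : Type*} [CommRing R] [CommRing S] (f : R →+* S) {u : R}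
    (hu : IsUnit u) : f (Ring.inverse u) = Ring.inverse (f u) := by
  have h1 : f u * f (Ring.inverse u) = 1 := by
    rw [← map_mul, Ring.mul_inverse_cancel _ hu, map_one]
  have h2 : Ring.inverse (f u) * (f u * f (Ring.inverse u)) = Ring.inverse (f u) * 1 := by
    rw [h1]
  rw [← mul_assoc, Ring.inverse_mul_cancel _ (hu.map f), one_mul, mul_one] at h2
  exact h2

section Zmod

variable {p e : ℕ} (hp : 1 < p) (he : 1 ≤ e)
set_option linter.unusedSectionVars false

lemma Pe_zero : ((p : ZMod (p ^ e))) ^ e = 0 := by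
  rw [← Nat.cast_pow, ZMod.natCast_self]

include hp he

lemma Pk_zero {k : ℕ} (hk : e ≤ k) : ((p : ZMod (p ^ e))) ^ k = 0 := by
  have h : ((p : ZMod (p ^ e))) ^ k = ((p : ZMod (p ^ e))) ^ e * ((p : ZMod (p ^ e))) ^ (k - e) := by
    rw [← pow_add]; congr 1; omega
  rw [h, Pe_zero, zero_mul]

lemma unit_one_add (t : ZMod (p ^ e)) : IsUnit (1 + (p : ZMod (p ^ e)) * t) := by
  refine IsNilpotent.isUnit_one_add ⟨e, ?_⟩
  rw [mul_pow, Pe_zero, zero_mul]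

lemma ker_char {k : ℕ} (hk : k ≤ e) (x : ZMod (p ^ e)) :
    (ZMod.castHom (pow_dvd_pow p hk) (ZMod (p ^ k))) x = 0 ↔ ((p : ZMod (p ^ e))) ^ k ∣ x := by
  haveI : NeZero (p ^ e) := ⟨pow_ne_zero _ (by omega)⟩
  haveI : NeZero (p ^ k) := ⟨pow_ne_zero _ (by omega)⟩
  constructor
  · intro h
    have hcast : ((x.val : ℕ) : ZMod (p ^ k)) = 0 := by
      rwa [ZMod.natCast_val, ← ZMod.castHom_apply (h := pow_dvd_pow p hk)]
    rw [ZMod.natCast_eq_zero_iff] at hcast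
    obtain ⟨m, hm⟩ := hcast
    refine ⟨(m : ZMod (p ^ e)), ?_⟩
    rw [← ZMod.natCast_zmod_val x, hm]
    push_cast; ring
  · rintro ⟨y, rfl⟩
    rw [map_mul, map_pow, map_natCast, ← Nat.cast_pow, ZMod.natCast_self, zero_mul]

lemma pe1_mul_zero {d : ZMod (p ^ e)} (h : ((p : ZMod (p ^ e))) ^ (e - 1) * d = 0) :
    (p : ZMod (p ^ e)) ∣ d := by
  haveI : NeZero (p ^ e) := ⟨pow_ne_zero _ (by omega)⟩
  have hc : ((p ^ (e - 1) * d.val : ℕ) : ZMod (p ^ e)) = 0 := by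
    push_cast
    rwa [ZMod.natCast_zmod_val]
  rw [ZMod.natCast_eq_zero_iff] at hc
  have hpe : p ^ e = p ^ (e - 1) * p := by rw [← pow_succ]; congr 1; omega
  obtain ⟨m, hm0⟩ := hc
  have hm : d.val = p * m := by
    have h2 : p ^ (e - 1) * d.val = p ^ (e - 1) * (p * m) := by rw [hm0, hpe]; ring
    exact Nat.eq_of_mul_eq_mul_left (pow_pos (by omega : 0 < p) (e - 1)) h2
  refine ⟨(m : ZMod (p ^ e)), ?_⟩
  rw [← ZMod.natCast_zmod_val d, hm]; push_cast; ring

lemma P_ne_zero (he2 : 2 ≤ e) : (p : ZMod (p ^ e)) ≠ 0 := by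
  haveI : NeZero (p ^ e) := ⟨pow_ne_zero _ (by omega)⟩
  intro h
  rw [show ((p : ZMod (p^e))) = ((p : ℕ) : ZMod (p^e)) from rfl,
    ZMod.natCast_eq_zero_iff] at h
  have := Nat.le_of_dvd (by omega) h
  have : p < p ^ e := by
    calc p = p ^ 1 := (pow_one p).symm
    _ < p ^ e := Nat.pow_lt_pow_right hp (by omega)
  omega

end Zmod


section Zlem

variable {p e : ℕ} (hp : 1 < p) (he : 1 ≤ e)
variable (A B : ZMod (p ^ e)) (z : ZMod (p ^ e) → ZMod (p ^ e))
variable (hz : ∀ X : ZMod (p ^ e), (p : ZMod (p ^ e)) ∣ X →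
      (p : ZMod (p ^ e)) ∣ z X ∧ z X = X ^ 3 + A * X * (z X) ^ 2 + B * (z X) ^ 3)

local notation "π" => ((p : ℕ) : ZMod (p ^ e))
local notation "It" => bosmaLenstraIter A B z ((p : ℕ) : ZMod (p ^ e))

set_option linter.unusedSectionVars false

include hp he hz

lemma z_zero : z 0 = 0 := by
  obtain ⟨hd, heq⟩ := hz 0 (dvd_zero _)
  obtain ⟨c, hc⟩ := hd
  have h0 : z 0 * (1 - B * (z 0) ^ 2) = 0 := by linear_combination heq
  have hu : IsUnit (1 - B * (z 0) ^ 2) := by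
    rw [hc, show (1 : ZMod (p ^ e)) - B * (π * c) ^ 2 = 1 + π * (-(B * π * c ^ 2)) by ring]
    exact unit_one_add hp he _
  exact eq_zero_of_mul_unit h0 hu

lemma z_shift (X δ : ZMod (p ^ e)) (hX : π ∣ X) (hδ : π ∣ δ)
    (h1 : δ * π ^ 2 = 0) (h2 : δ ^ 2 * π = 0) (h3 : δ ^ 3 = 0) :
    z (X + δ) = z X := by
  obtain ⟨x, rfl⟩ := hX
  obtain ⟨dd, rfl⟩ := hδ
  have hXδ : π ∣ π * x + π * dd := ⟨x + dd, by ring⟩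
  obtain ⟨v, hv⟩ := (hz _ hXδ).1
  obtain ⟨vp, hvp⟩ := (hz _ ⟨x, rfl⟩).1
  have E1 := (hz _ hXδ).2
  have E2 := (hz _ ⟨x, rfl⟩).2
  rw [hv] at E1
  rw [hvp] at E2
  have key := zdiff A B π x v vp (π * dd) h1 h2 h3 E1 E2
  have hu : IsUnit (1 - A * (π * x + π * dd) * (π * v + π * vp)
      - B * ((π * v) ^ 2 + (π * v) * (π * vp) + (π * vp) ^ 2)) := by
    rw [show (1 : ZMod (p ^ e)) - A * (π * x + π * dd) * (π * v + π * vp)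
      - B * ((π * v) ^ 2 + (π * v) * (π * vp) + (π * vp) ^ 2)
      = 1 + π * (-(π * (B * vp ^ 2 + B * v * vp + B * v ^ 2 + A * vp * dd + A * v * dd
          + A * x * vp + A * x * v))) by ring]
    exact unit_one_add hp he _
  have hz0 := eq_zero_of_mul_unit key hu
  rw [hv, hvp]
  linear_combination hz0

lemma op_zero : bosmaLenstraOp A B z 0 π = π := by
  unfold bosmaLenstraOp
  rw [z_zero hp he A B z hz]
  have h1 : bosmaLenstraT1 A B 0 0 π (z π) = π := by unfold bosmaLenstraT1; ring
  have h2 : bosmaLenstraT2 A B 0 0 π (z π) = 1 := by unfold bosmaLenstraT2; ring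
  rw [h1, h2, Ring.inverse_one, one_mul]

lemma op_dvd (X : ZMod (p ^ e)) (hX : π ∣ X) : π ∣ bosmaLenstraOp A B z X π := by
  obtain ⟨x, rfl⟩ := hX
  obtain ⟨z1, hz1⟩ := (hz _ ⟨x, rfl⟩).1
  obtain ⟨z2, hz2⟩ := (hz π ⟨1, (mul_one _).symm⟩).1
  unfold bosmaLenstraOp
  rw [hz1, hz2, T1_eq]
  exact (dvd_mul_right π _).mul_left _

lemma iter_dvd : ∀ n, π ∣ It n := by
  intro n
  induction n with
  | zero => exact dvd_zero _
  | succ n ih =>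
    show π ∣ bosmaLenstraOp A B z (It n) π
    exact op_dvd hp he A B z hz _ ih

lemma op_shift (X δ : ZMod (p ^ e)) (hX : π ∣ X) (hδ : π ∣ δ)
    (h1 : δ * π ^ 2 = 0) (h2 : δ ^ 2 * π = 0) (h3 : δ ^ 3 = 0) :
    bosmaLenstraOp A B z (X + δ) π = bosmaLenstraOp A B z X π + δ := by
  have hzz := z_shift hp he A B z hz X δ hX hδ h1 h2 h3
  obtain ⟨x, rfl⟩ := hX
  obtain ⟨z1, hz1⟩ := (hz _ ⟨x, rfl⟩).1
  obtain ⟨z2, hz2⟩ := (hz π ⟨1, (mul_one _).symm⟩).1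
  unfold bosmaLenstraOp
  rw [hzz, hz1, hz2, T1_shift A B π x z1 z2 δ h1 h2, T2_shift A B π x z1 z2 δ h1 h2]
  obtain ⟨S, hS⟩ : ∃ s, bosmaLenstraT2 A B (π * x) (π * z1) π (π * z2) = 1 + π ^ 2 * s :=
    ⟨_, T2_eq A B π x z1 z2⟩
  have hu : IsUnit (bosmaLenstraT2 A B (π * x) (π * z1) π (π * z2)) := by
    rw [hS, show (1 : ZMod (p ^ e)) + π ^ 2 * S = 1 + π * (π * S) by ring]
    exact unit_one_add hp he _
  have hδT2 : δ * bosmaLenstraT2 A B (π * x) (π * z1) π (π * z2) = δ := by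
    rw [hS]; linear_combination S * h1
  have hinvδ : Ring.inverse (bosmaLenstraT2 A B (π * x) (π * z1) π (π * z2)) * δ = δ := by
    calc Ring.inverse (bosmaLenstraT2 A B (π * x) (π * z1) π (π * z2)) * δ
        = Ring.inverse (bosmaLenstraT2 A B (π * x) (π * z1) π (π * z2))
            * (δ * bosmaLenstraT2 A B (π * x) (π * z1) π (π * z2)) := by rw [hδT2]
      _ = δ * (Ring.inverse (bosmaLenstraT2 A B (π * x) (π * z1) π (π * z2))
            * bosmaLenstraT2 A B (π * x) (π * z1) π (π * z2)) := by ring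
      _ = δ := by rw [Ring.inverse_mul_cancel _ hu, mul_one]
  rw [mul_add, hinvδ]

lemma iter_shift (n : ℕ) (h1 : It n * π ^ 2 = 0) (h2 : (It n) ^ 2 * π = 0)
    (h3 : (It n) ^ 3 = 0) : ∀ k, It (n + k) = It k + It n := by
  intro k
  induction k with
  | zero => show It n = It 0 + It n; rw [show It 0 = 0 from rfl, zero_add]
  | succ k ih =>
    rw [show n + (k + 1) = (n + k) + 1 by omega]
    show bosmaLenstraOp A B z (It (n + k)) π = bosmaLenstraOp A B z (It k) π + It n
    rw [ih]
    exact op_shift hp he A B z hz (It k) (It n) (iter_dvd hp he A B z hz k)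
      (iter_dvd hp he A B z hz n) h1 h2 h3

lemma iter_mul (c : ℕ) (h1 : It c * π ^ 2 = 0) (h2 : (It c) ^ 2 * π = 0)
    (h3 : (It c) ^ 3 = 0) : ∀ m, It (m * c) = (m : ZMod (p ^ e)) * It c := by
  intro m
  induction m with
  | zero =>
    rw [Nat.zero_mul, show It 0 = 0 from rfl]
    push_cast; ring
  | succ m ih =>
    have c1 : It (m * c) * π ^ 2 = 0 := by rw [ih]; linear_combination (m : ZMod (p ^ e)) * h1
    have c2 : (It (m * c)) ^ 2 * π = 0 := by
      rw [ih]; linear_combination ((m : ZMod (p ^ e))) ^ 2 * h2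
    have c3 : (It (m * c)) ^ 3 = 0 := by
      rw [ih]; linear_combination ((m : ZMod (p ^ e))) ^ 3 * h3
    have hstep := iter_shift hp he A B z hz (m * c) c1 c2 c3 c
    rw [show (m + 1) * c = m * c + c by ring, hstep, ih]
    push_cast; ring

lemma zero_shift (a : ℕ) (ha : It a = 0) : ∀ k, It (a + k) = It k := by
  intro k
  have := iter_shift hp he A B z hz a (by rw [ha]; ring) (by rw [ha]; ring)
    (by rw [ha]; ring) k
  rw [this, ha, add_zero]

lemma mult_zero (m : ℕ) (hm : It m = 0) : ∀ t, It (t * m) = 0 := by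
  intro t
  rw [iter_mul hp he A B z hz m (by rw [hm]; ring) (by rw [hm]; ring) (by rw [hm]; ring) t,
    hm, mul_zero]

lemma gcd_zero : ∀ a b : ℕ, It a = 0 → It b = 0 → It (Nat.gcd a b) = 0 := by
  intro a
  induction a using Nat.strong_induction_on with
  | _ a IH =>
    intro b ha hb
    rcases Nat.eq_zero_or_pos a with h0 | hpos
    · subst h0; simpa [Nat.gcd_zero_left] using hb
    · rw [Nat.gcd_rec]
      refine IH (b % a) (Nat.mod_lt _ hpos) a ?_ ha
      have h0' : It (a * (b / a)) = 0 := by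
        rw [Nat.mul_comm]; exact mult_zero hp he A B z hz a ha (b / a)
      have hsh := zero_shift hp he A B z hz (a * (b / a)) h0' (b % a)
      rw [Nat.div_add_mod b a] at hsh
      rw [← hsh]; exact hb

lemma endgame (hpp : p.Prime) (he2 : 2 ≤ e) (H1 : It (p ^ (e - 2)) ≠ 0)
    (H2 : It (p ^ (e - 1)) = 0) : ∀ n, It n = 0 ↔ p ^ (e - 1) ∣ n := by
  have hP : 0 < p ^ (e - 1) := pow_pos (by omega) _
  intro n
  constructor
  · intro h
    have h0' : It (p ^ (e - 1) * (n / p ^ (e - 1))) = 0 := by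
      rw [Nat.mul_comm]; exact mult_zero hp he A B z hz _ H2 _
    have hsh := zero_shift hp he A B z hz _ h0' (n % p ^ (e - 1))
    rw [Nat.div_add_mod n (p ^ (e - 1))] at hsh
    rw [hsh] at h
    rcases Nat.eq_zero_or_pos (n % p ^ (e - 1)) with h0 | hpos
    · exact Nat.dvd_of_mod_eq_zero h0
    · exfalso
      have hd := gcd_zero hp he A B z hz (n % p ^ (e - 1)) (p ^ (e - 1)) h H2
      obtain ⟨j, hj, hd_eq⟩ := (Nat.dvd_prime_pow hpp).mp
        (Nat.gcd_dvd_right (n % p ^ (e - 1)) (p ^ (e - 1)))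
      have hle : Nat.gcd (n % p ^ (e - 1)) (p ^ (e - 1)) ≤ n % p ^ (e - 1) :=
        Nat.le_of_dvd hpos (Nat.gcd_dvd_left _ _)
      have hmod : n % p ^ (e - 1) < p ^ (e - 1) := Nat.mod_lt _ hP
      have hjle : j ≤ e - 2 := by
        by_contra hj2
        have hje : j = e - 1 := by omega
        rw [hje] at hd_eq
        omega
      have hdvd : Nat.gcd (n % p ^ (e - 1)) (p ^ (e - 1)) ∣ p ^ (e - 2) := by
        rw [hd_eq]; exact pow_dvd_pow p hjle
      obtain ⟨t, ht⟩ := hdvd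
      have : It (p ^ (e - 2)) = 0 := by
        rw [ht, Nat.mul_comm]; exact mult_zero hp he A B z hz _ hd t
      exact H1 this
  · rintro ⟨t, rfl⟩
    rw [Nat.mul_comm]; exact mult_zero hp he A B z hz _ H2 t

end Zlem

section Red

variable {p e : ℕ} (hp : 1 < p) (he : 1 ≤ e)
variable (A B : ZMod (p ^ e)) (z : ZMod (p ^ e) → ZMod (p ^ e))
variable (hz : ∀ X : ZMod (p ^ e), (p : ZMod (p ^ e)) ∣ X →
      (p : ZMod (p ^ e)) ∣ z X ∧ z X = X ^ 3 + A * X * (z X) ^ 2 + B * (z X) ^ 3)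

local notation "π" => ((p : ℕ) : ZMod (p ^ e))

set_option linter.unusedSectionVars false

include hp he

lemma pow_mul_pow_zero (a b : ℕ) (hab : e ≤ a + b) (t : ZMod (p ^ e)) :
    π ^ a * t * π ^ b = 0 := by
  rw [show π ^ a * t * π ^ b = π ^ (a + b) * t by ring, Pk_zero hp he hab, zero_mul]

lemma sq_pow_zero (a b : ℕ) (hab : e ≤ 2 * a + b) (t : ZMod (p ^ e)) :
    (π ^ a * t) ^ 2 * π ^ b = 0 := by
  rw [show (π ^ a * t) ^ 2 * π ^ b = π ^ (2 * a + b) * t ^ 2 by ring, Pk_zero hp he hab, zero_mul]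

lemma cube_pow_zero (a : ℕ) (hab : e ≤ 3 * a) (t : ZMod (p ^ e)) :
    (π ^ a * t) ^ 3 = 0 := by
  rw [show (π ^ a * t) ^ 3 = π ^ (3 * a) * t ^ 3 by ring, Pk_zero hp he hab, zero_mul]

lemma map_T1 {S : Type*} [CommRing S] (g : ZMod (p ^ e) →+* S) (a b x1 y1 x2 y2 : ZMod (p ^ e)) :
    g (bosmaLenstraT1 a b x1 y1 x2 y2)
      = bosmaLenstraT1 (g a) (g b) (g x1) (g y1) (g x2) (g y2) := by
  simp only [bosmaLenstraT1, map_add, map_sub, map_mul, map_pow, map_ofNat]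

lemma map_T2 {S : Type*} [CommRing S] (g : ZMod (p ^ e) →+* S) (a b x1 y1 x2 y2 : ZMod (p ^ e)) :
    g (bosmaLenstraT2 a b x1 y1 x2 y2)
      = bosmaLenstraT2 (g a) (g b) (g x1) (g y1) (g x2) (g y2) := by
  simp only [bosmaLenstraT2, map_add, map_sub, map_mul, map_pow, map_ofNat, map_one]

lemma T2_isUnit (X : ZMod (p ^ e)) (hX : π ∣ X) (hz1 : π ∣ z X) (hz2 : π ∣ z π) :
    IsUnit (bosmaLenstraT2 A B X (z X) π (z π)) := by
  obtain ⟨x, rfl⟩ := hX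
  obtain ⟨z1, hu1⟩ := hz1
  obtain ⟨z2, hu2⟩ := hz2
  rw [hu1, hu2]
  obtain ⟨S, hS⟩ : ∃ s, bosmaLenstraT2 A B (π * x) (π * z1) π (π * z2) = 1 + π ^ 2 * s :=
    ⟨_, T2_eq A B π x z1 z2⟩
  rw [hS, show (1 : ZMod (p ^ e)) + π ^ 2 * S = 1 + π * (π * S) by ring]
  exact unit_one_add hp he _

include hz

lemma reduction (he2 : 2 ≤ e) :
    ∃ z' : ZMod (p ^ (e - 1)) → ZMod (p ^ (e - 1)),
      (∀ Y : ZMod (p ^ (e - 1)), ((p : ℕ) : ZMod (p ^ (e - 1))) ∣ Y →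
        ((p : ℕ) : ZMod (p ^ (e - 1))) ∣ z' Y ∧
          z' Y = Y ^ 3
            + (ZMod.castHom (pow_dvd_pow p (Nat.sub_le e 1)) (ZMod (p ^ (e - 1))) A) * Y
              * (z' Y) ^ 2
            + (ZMod.castHom (pow_dvd_pow p (Nat.sub_le e 1)) (ZMod (p ^ (e - 1))) B)
              * (z' Y) ^ 3) ∧
      ∀ n, ZMod.castHom (pow_dvd_pow p (Nat.sub_le e 1)) (ZMod (p ^ (e - 1)))
            (bosmaLenstraIter A B z π n)
          = bosmaLenstraIter
              (ZMod.castHom (pow_dvd_pow p (Nat.sub_le e 1)) (ZMod (p ^ (e - 1))) A)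
              (ZMod.castHom (pow_dvd_pow p (Nat.sub_le e 1)) (ZMod (p ^ (e - 1))) B)
              z' ((p : ℕ) : ZMod (p ^ (e - 1))) n := by
  haveI : NeZero (p ^ (e - 1)) := ⟨pow_ne_zero _ (by omega)⟩
  haveI : NeZero (p ^ e) := ⟨pow_ne_zero _ (by omega)⟩
  set f := ZMod.castHom (pow_dvd_pow p (Nat.sub_le e 1)) (ZMod (p ^ (e - 1))) with hf
  have hsec : ∀ Y : ZMod (p ^ (e - 1)), f ((Y.val : ZMod (p ^ e))) = Y := by
    intro Y; rw [map_natCast, ZMod.natCast_zmod_val]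
  have hkerd : ∀ x : ZMod (p ^ e), f x = 0 → ∃ t, x = π ^ (e - 1) * t := by
    intro x hx
    exact (ker_char hp he (Nat.sub_le e 1) x).mp hx
  have hpe1 : π ^ (e - 1) = π * π ^ (e - 2) := by
    rw [← pow_succ']; congr 1; omega
  -- the reduced z function
  set z' : ZMod (p ^ (e - 1)) → ZMod (p ^ (e - 1)) :=
    fun Y => f (z ((Y.val : ZMod (p ^ e)))) with hz'def
  -- f ∘ z commutes
  have hliftz : ∀ X : ZMod (p ^ e), π ∣ X → f (z X) = z' (f X) := by
    intro X hX
    obtain ⟨t, ht⟩ := hkerd ((((f X).val : ZMod (p ^ e))) - X)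
      (by rw [map_sub, hsec, sub_self])
    have hL : (((f X).val : ZMod (p ^ e))) = X + π ^ (e - 1) * t := by
      linear_combination ht
    have hzeq : z ((((f X).val : ZMod (p ^ e)))) = z X := by
      rw [hL]
      refine z_shift hp he A B z hz X (π ^ (e - 1) * t) hX ?_ ?_ ?_ ?_
      · rw [hpe1]; exact ⟨π ^ (e - 2) * t, by ring⟩
      · exact pow_mul_pow_zero hp he (e - 1) 2 (by omega) t
      · simpa using sq_pow_zero hp he (e - 1) 1 (by omega) t
      · exact cube_pow_zero hp he (e - 1) (by omega) t
    rw [hz'def]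
    simp only
    rw [hzeq]
  have hπ' : f π = ((p : ℕ) : ZMod (p ^ (e - 1))) := map_natCast f p
  -- z' has the defining property
  have hz' : ∀ Y : ZMod (p ^ (e - 1)), ((p : ℕ) : ZMod (p ^ (e - 1))) ∣ Y →
      ((p : ℕ) : ZMod (p ^ (e - 1))) ∣ z' Y ∧
        z' Y = Y ^ 3 + (f A) * Y * (z' Y) ^ 2 + (f B) * (z' Y) ^ 3 := by
    intro Y hY
    obtain ⟨c, hc⟩ := hY
    have hfX : f (π * ((c.val : ZMod (p ^ e)))) = Y := by
      rw [map_mul, hπ', hsec, ← hc]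
    obtain ⟨t, ht⟩ := hkerd ((((Y.val : ZMod (p ^ e)))) - π * ((c.val : ZMod (p ^ e))))
      (by rw [map_sub, hsec, hfX, sub_self])
    have hL : ((Y.val : ZMod (p ^ e))) = π * ((c.val : ZMod (p ^ e))) + π ^ (e - 1) * t := by
      linear_combination ht
    have hdL : π ∣ ((Y.val : ZMod (p ^ e))) := by
      rw [hL, hpe1]; exact ⟨(c.val : ZMod (p ^ e)) + π ^ (e - 2) * t, by ring⟩
    obtain ⟨hzd, hzeq⟩ := hz _ hdL
    constructor
    · obtain ⟨w, hw⟩ := hzd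
      exact ⟨f w, by rw [hz'def]; simp only; rw [hw, map_mul, hπ']⟩
    · have := congrArg f hzeq
      rw [map_add, map_add, map_mul, map_mul, map_mul, map_pow, map_pow, map_pow, hsec] at this
      exact this
  refine ⟨z', hz', ?_⟩
  -- op commutes
  have hop : ∀ X : ZMod (p ^ e), π ∣ X →
      f (bosmaLenstraOp A B z X π) = bosmaLenstraOp (f A) (f B) z' (f X)
        ((p : ℕ) : ZMod (p ^ (e - 1))) := by
    intro X hX
    have hu : IsUnit (bosmaLenstraT2 A B X (z X) π (z π)) :=
      T2_isUnit hp he A B z X hX (hz X hX).1 (hz π ⟨1, (mul_one _).symm⟩).1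
    unfold bosmaLenstraOp
    rw [map_mul, map_ring_inverse f hu, map_T2 hp he, map_T1 hp he,
      hliftz X hX, hliftz π ⟨1, (mul_one _).symm⟩, hπ']
  -- iter commutes
  intro n
  induction n with
  | zero => exact map_zero f
  | succ n ih =>
    show f (bosmaLenstraOp A B z (bosmaLenstraIter A B z π n) π) = _
    rw [hop _ (iter_dvd hp he A B z hz n), ih]
    rfl

end Red

theorem aux (p : ℕ) (hpp : p.Prime) :
    ∀ e : ℕ, 1 ≤ e → ∀ (A B : ZMod (p ^ e)) (z : ZMod (p ^ e) → ZMod (p ^ e)),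
      (∀ X : ZMod (p ^ e), (p : ZMod (p ^ e)) ∣ X →
        (p : ZMod (p ^ e)) ∣ z X ∧ z X = X ^ 3 + A * X * (z X) ^ 2 + B * (z X) ^ 3) →
      ∀ n : ℕ, bosmaLenstraIter A B z ((p : ℕ) : ZMod (p ^ e)) n = 0 ↔ p ^ (e - 1) ∣ n := by
  have hp : 1 < p := hpp.one_lt
  intro e
  induction e using Nat.strong_induction_on with
  | _ e IH =>
    intro he A B z hz n
    rcases Nat.lt_or_ge e 2 with he1 | he2
    · -- e = 1
      have he1' : e = 1 := by omega
      subst he1'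
      have hπ0 : ((p : ℕ) : ZMod (p ^ 1)) = 0 := by
        rw [ZMod.natCast_eq_zero_iff, pow_one]
      have hz0 := z_zero hp le_rfl A B z hz
      have hall : ∀ m, bosmaLenstraIter A B z ((p : ℕ) : ZMod (p ^ 1)) m = 0 := by
        intro m
        induction m with
        | zero => rfl
        | succ m ih =>
          show bosmaLenstraOp A B z (bosmaLenstraIter A B z ((p : ℕ) : ZMod (p ^ 1)) m)
            ((p : ℕ) : ZMod (p ^ 1)) = 0
          rw [ih, hπ0]
          unfold bosmaLenstraOp
          rw [hz0, show bosmaLenstraT1 A B 0 0 0 0 = 0 by unfold bosmaLenstraT1; ring, mul_zero]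
      simp [hall n]
    · -- e ≥ 2
      -- first reduction, to level e - 1
      obtain ⟨z', hz', hcomm⟩ := reduction hp (by omega) A B z hz he2
      set f := ZMod.castHom (pow_dvd_pow p (Nat.sub_le e 1)) (ZMod (p ^ (e - 1))) with hfdef
      rcases Nat.lt_or_ge e 3 with he2' | he3
      · -- e = 2
        have he2'' : e = 2 := by omega
        subst he2''
        have hIt1 : bosmaLenstraIter A B z ((p : ℕ) : ZMod (p ^ 2)) 1
            = ((p : ℕ) : ZMod (p ^ 2)) := by
          show bosmaLenstraOp A B z 0 ((p : ℕ) : ZMod (p ^ 2)) = _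
          exact op_zero hp (by omega) A B z hz
        have hπ2 : ((p : ℕ) : ZMod (p ^ 2)) ^ 2 = 0 := Pe_zero
        have s1 : bosmaLenstraIter A B z ((p : ℕ) : ZMod (p ^ 2)) 1
            * ((p : ℕ) : ZMod (p ^ 2)) ^ 2 = 0 := by rw [hIt1, hπ2, mul_zero]
        have s2 : (bosmaLenstraIter A B z ((p : ℕ) : ZMod (p ^ 2)) 1) ^ 2
            * ((p : ℕ) : ZMod (p ^ 2)) = 0 := by
          rw [hIt1]
          linear_combination ((p : ℕ) : ZMod (p ^ 2)) * hπ2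
        have s3 : (bosmaLenstraIter A B z ((p : ℕ) : ZMod (p ^ 2)) 1) ^ 3 = 0 := by
          rw [hIt1]
          linear_combination ((p : ℕ) : ZMod (p ^ 2)) * hπ2
        have hmul := iter_mul hp (by omega) A B z hz 1 s1 s2 s3
        have H1 : bosmaLenstraIter A B z ((p : ℕ) : ZMod (p ^ 2)) (p ^ (2 - 2)) ≠ 0 := by
          rw [show p ^ (2 - 2) = 1 by norm_num, hIt1]
          exact P_ne_zero hp (by omega) le_rfl
        have H2 : bosmaLenstraIter A B z ((p : ℕ) : ZMod (p ^ 2)) (p ^ (2 - 1)) = 0 := by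
          rw [show p ^ (2 - 1) = p * 1 by norm_num, hmul p, hIt1]
          rw [show ((p : ℕ) : ZMod (p ^ 2)) * ((p : ℕ) : ZMod (p ^ 2))
            = ((p : ℕ) : ZMod (p ^ 2)) ^ 2 by ring, hπ2]
        exact endgame hp (by omega) A B z hz hpp (by omega) H1 H2 n
      · -- e ≥ 3
        haveI : NeZero (p ^ e) := ⟨pow_ne_zero _ (by omega)⟩
        haveI : NeZero (p ^ (e - 1)) := ⟨pow_ne_zero _ (by omega)⟩
        obtain ⟨z'', hz'', hcomm2⟩ := reduction hp (by omega : 1 ≤ e - 1) (f A) (f B) z' hz'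
          (by omega : 2 ≤ e - 1)
        have IH1 := IH (e - 1) (by omega) (by omega) (f A) (f B) z' hz'
        have IH2 := IH (e - 1 - 1) (by omega) (by omega) _ _ z'' hz''
        set δ := bosmaLenstraIter A B z ((p : ℕ) : ZMod (p ^ e)) (p ^ (e - 3)) with hδdef
        have hfδ : f δ = bosmaLenstraIter (f A) (f B) z' ((p : ℕ) : ZMod (p ^ (e - 1)))
            (p ^ (e - 3)) := hcomm _
        have hδ1 : f δ ≠ 0 := by
          rw [hfδ]
          intro hzero
          have := (IH1 (p ^ (e - 3))).mp hzero
          rw [Nat.pow_dvd_pow_iff_le_right hp] at this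
          omega
        have hδ2 : ZMod.castHom (pow_dvd_pow p (Nat.sub_le (e - 1) 1)) (ZMod (p ^ (e - 1 - 1)))
            (f δ) = 0 := by
          rw [hfδ, hcomm2 (p ^ (e - 3))]
          exact (IH2 (p ^ (e - 3))).mpr (pow_dvd_pow p (by omega))
        -- δ = π^(e-2) * d
        obtain ⟨y', hy'⟩ := (ker_char hp (by omega : 1 ≤ e - 1) (Nat.sub_le (e - 1) 1) (f δ)).mp hδ2
        obtain ⟨t, ht⟩ := (ker_char hp (by omega : 1 ≤ e) (Nat.sub_le e 1)
            (δ - ((p : ℕ) : ZMod (p ^ e)) ^ (e - 1 - 1) * ((y'.val : ZMod (p ^ e))))).mp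
          (by
            rw [map_sub, map_mul, map_pow, map_natCast, map_natCast, ZMod.natCast_zmod_val,
              ← hy', sub_self])
        have hδd : δ = ((p : ℕ) : ZMod (p ^ e)) ^ (e - 2)
            * (((y'.val : ZMod (p ^ e))) + ((p : ℕ) : ZMod (p ^ e)) * t) := by
          rw [show e - 2 = e - 1 - 1 by omega]
          have h1 : ((p : ℕ) : ZMod (p ^ e)) ^ (e - 1)
              = ((p : ℕ) : ZMod (p ^ e)) ^ (e - 1 - 1) * ((p : ℕ) : ZMod (p ^ e)) := by
            rw [← pow_succ]; congr 1; omega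
          linear_combination ht + h1 * t
        set d := (((y'.val : ZMod (p ^ e))) + ((p : ℕ) : ZMod (p ^ e)) * t) with hddef
        have s1 : δ * ((p : ℕ) : ZMod (p ^ e)) ^ 2 = 0 := by
          rw [hδd]; exact pow_mul_pow_zero hp (by omega) (e - 2) 2 (by omega) d
        have s2 : δ ^ 2 * ((p : ℕ) : ZMod (p ^ e)) = 0 := by
          rw [hδd]; simpa using sq_pow_zero hp (by omega) (e - 2) 1 (by omega) d
        have s3 : δ ^ 3 = 0 := by
          rw [hδd]; exact cube_pow_zero hp (by omega) (e - 2) (by omega) d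
        have hmul := iter_mul hp (by omega) A B z hz (p ^ (e - 3)) s1 s2 s3
        have H1 : bosmaLenstraIter A B z ((p : ℕ) : ZMod (p ^ e)) (p ^ (e - 2)) ≠ 0 := by
          rw [show p ^ (e - 2) = p * p ^ (e - 3) by rw [← pow_succ']; congr 1; omega, hmul p]
          intro hzero
          have hπd : ((p : ℕ) : ZMod (p ^ e)) ^ (e - 1) * d = 0 := by
            rw [show ((p : ℕ) : ZMod (p ^ e)) ^ (e - 1)
              = ((p : ℕ) : ZMod (p ^ e)) * ((p : ℕ) : ZMod (p ^ e)) ^ (e - 2) by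
                rw [← pow_succ']; congr 1; omega]
            rw [mul_assoc, ← hδd]
            exact hzero
          obtain ⟨d', hd'⟩ := pe1_mul_zero hp (by omega) hπd
          apply hδ1
          refine (ker_char hp (by omega : 1 ≤ e) (Nat.sub_le e 1) δ).mpr ⟨d', ?_⟩
          rw [hδd, hd', show ((p : ℕ) : ZMod (p ^ e)) ^ (e - 1)
            = ((p : ℕ) : ZMod (p ^ e)) ^ (e - 2) * ((p : ℕ) : ZMod (p ^ e)) by
              rw [← pow_succ]; congr 1; omega]
          ring
        have H2 : bosmaLenstraIter A B z ((p : ℕ) : ZMod (p ^ e)) (p ^ (e - 1)) = 0 := by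
          rw [show p ^ (e - 1) = p ^ 2 * p ^ (e - 3) by rw [← pow_add]; congr 1; omega,
            hmul (p ^ 2)]
          rw [show ((p ^ 2 : ℕ) : ZMod (p ^ e)) = ((p : ℕ) : ZMod (p ^ e)) ^ 2 by push_cast; ring]
          linear_combination s1
        exact endgame hp (by omega) A B z hz hpp (by omega) H1 H2 n
end BLaux


/-- The point at infinity `(p : 1 : z p)` of `E_{A,B}(ℤ/p^eℤ)` has order exactly
`p^(e-1)`: its `n`-th multiple is the identity iff `p^(e-1) ∣ n`. -/
theorem infinity_point_order_pow
    {p : ℕ} (hp : p.Prime) (hp5 : 5 ≤ p) {e : ℕ} (he : 1 ≤ e)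
    (A B : ZMod (p ^ e)) (hdisc : IsUnit (4 * A ^ 3 + 27 * B ^ 2))
    (z : ZMod (p ^ e) → ZMod (p ^ e))
    (hz : ∀ X : ZMod (p ^ e), (p : ZMod (p ^ e)) ∣ X →
      (p : ZMod (p ^ e)) ∣ z X ∧ z X = X ^ 3 + A * X * (z X) ^ 2 + B * (z X) ^ 3) :
    ∀ n : ℕ,
      bosmaLenstraIter A B z (p : ZMod (p ^ e)) n = 0 ↔ p ^ (e - 1) ∣ n := by
  intro n
  exact BLaux.aux p hp e he A B z hz n
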